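/- For every positive integer p, ε_p > g(p) - g(p+1), where g(x) := (1/12)/(x + (1/30)/(x + (53/210)/(x + (195/371)/x))). -/

import Mathlib

/-- Robbins' summand: `ε_p = (p + 1/2) log((p+1)/p) - 1`. -/
noncomputable def eps (p : ℕ) : ℝ :=
  ((p : ℝ) + 1/2) * Real.log (((p : ℝ) + 1) / p) - 1

/-- Depth-4 continued fraction with numerators `1/12`, `1/30`, `53/210`, `195/371`. -/
noncomputable def g (x : ℝ) : ℝ :=
  (1/12) / (x + (1/30) / (x + (53/210) / (x + (195/371) / x)))

lemma g_eq_aux (x : ℝ) (hx : 0 < x) :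
    g x = (1/12 * (x^3 + (1237/1590)*x)) / (x^4 + (43/53)*x^2 + 13/742) := by
  have h1 : 0 < x + (195/371)/x := by positivity
  have h2 : 0 < x + (53/210)/(x + (195/371)/x) := by positivity
  have h3 : 0 < x + (1/30)/(x + (53/210)/(x + (195/371)/x)) := by positivity
  have h4 : 0 < x^4 + (43/53)*x^2 + 13/742 := by positivity
  rw [g]
  field_simp
  ring

lemma log_lb {t : ℝ} (ht0 : 0 < t) (ht3 : t ≤ 1/3) :
    2*(t + t^3/3 + t^5/5 + t^7/7 + t^9/9 + t^11/11) ≤ Real.log ((1+t)/(1-t)) := by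
  have habs : |t| < 1 := by rw [abs_of_pos ht0]; linarith
  have habsn : |(-t)| < 1 := by rwa [abs_neg]
  have A := Real.abs_log_sub_add_sum_range_le habs 15
  have B := Real.abs_log_sub_add_sum_range_le habsn 15
  rw [abs_of_pos ht0] at A
  rw [abs_neg, abs_of_pos ht0] at B
  rw [abs_le] at A B
  obtain ⟨-, A2⟩ := A
  obtain ⟨B1, -⟩ := B
  simp only [Finset.sum_range_succ, Finset.sum_range_zero] at A2 B1
  norm_num at A2 B1
  have hlt : (0:ℝ) < 1 - t := by linarith
  rw [Real.log_div (by linarith) hlt.ne']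
  have h27 : t^3 ≤ 1/27 := by
    calc t^3 ≤ (1/3)^3 := pow_le_pow_left₀ ht0.le ht3 3
    _ = 1/27 := by norm_num
  have h16 : t^16 ≤ t^13/27 := by
    calc t^16 = t^13 * t^3 := by ring
    _ ≤ t^13 * (1/27) := mul_le_mul_of_nonneg_left h27 (pow_nonneg ht0.le 13)
    _ = t^13/27 := by ring
  have hE : t^16/(1-t) ≤ (3/2)*t^16 := by
    rw [div_le_iff₀ hlt]
    nlinarith [pow_nonneg ht0.le 16]
  have h13 : 0 ≤ t^13 := pow_nonneg ht0.le 13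
  have h15 : 0 ≤ t^15 := pow_nonneg ht0.le 15
  linarith

lemma gap_lt (x : ℝ) (hx : 1 ≤ x) :
    g x - g (x+1) < (1/(2*x+1))^2/3 + (1/(2*x+1))^4/5 + (1/(2*x+1))^6/7
      + (1/(2*x+1))^8/9 + (1/(2*x+1))^10/11 := by
  have hx0 : 0 < x := by linarith
  have h2x : (0:ℝ) < 2*x+1 := by linarith
  have hB : (0:ℝ) < x^4 + (43/53)*x^2 + 13/742 := by positivity
  have hD : (0:ℝ) < (x+1)^4 + (43/53)*(x+1)^2 + 13/742 := by positivity
  have hs : (0:ℝ) ≤ x - 1 := by linarith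
  have hN : (0:ℝ) < (15817695825/169573712 + (x-1) * (623280404669/1271802840 + (x-1) * (538583329309/476926065 + (x-1) * (14359473851/9634870 + (x-1) * (313367361355/254360568 + (x-1) * (3955454905/6056204 + (x-1) * (59095628957/272529180 + (x-1) * (5887744/142835 + (x-1) * (1471936/428505))))))))) := by
    refine add_pos_of_pos_of_nonneg (by norm_num) (mul_nonneg hs ?_)
    refine add_nonneg (by norm_num) (mul_nonneg hs ?_)
    refine add_nonneg (by norm_num) (mul_nonneg hs ?_)
    refine add_nonneg (by norm_num) (mul_nonneg hs ?_)
    refine add_nonneg (by norm_num) (mul_nonneg hs ?_)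
    refine add_nonneg (by norm_num) (mul_nonneg hs ?_)
    refine add_nonneg (by norm_num) (mul_nonneg hs ?_)
    refine add_nonneg (by norm_num) (mul_nonneg hs ?_)
    norm_num
  have key : (1/(2*x+1))^2/3 + (1/(2*x+1))^4/5 + (1/(2*x+1))^6/7
      + (1/(2*x+1))^8/9 + (1/(2*x+1))^10/11 - (g x - g (x+1))
      = ((15817695825/169573712 + (x-1) * (623280404669/1271802840 + (x-1) * (538583329309/476926065 + (x-1) * (14359473851/9634870 + (x-1) * (313367361355/254360568 + (x-1) * (3955454905/6056204 + (x-1) * (59095628957/272529180 + (x-1) * (5887744/142835 + (x-1) * (1471936/428505))))))))))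
        / ((2*x+1)^10 * (x^4 + (43/53)*x^2 + 13/742)
            * ((x+1)^4 + (43/53)*(x+1)^2 + 13/742)) := by
    rw [g_eq_aux x hx0, g_eq_aux (x+1) (by linarith)]
    field_simp
    ring
  have hden : (0:ℝ) < (2*x+1)^10 * (x^4 + (43/53)*x^2 + 13/742)
      * ((x+1)^4 + (43/53)*(x+1)^2 + 13/742) :=
    mul_pos (mul_pos (pow_pos h2x 10) hB) hD
  have hpos := div_pos hN hden
  linarith [key, hpos]

/-- For every positive integer `p`, `ε_p > g(p) - g(p+1)`. -/
theorem eps_gt_g_diff (p : ℕ) (hp : 0 < p) :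
    eps p > g p - g ((p : ℝ) + 1) := by
  have hx1 : (1:ℝ) ≤ (p:ℝ) := by exact_mod_cast hp
  have hx0 : (0:ℝ) < p := by linarith
  have h2x : (0:ℝ) < 2*(p:ℝ)+1 := by linarith
  set t : ℝ := 1/(2*(p:ℝ)+1) with ht
  have ht0 : 0 < t := by rw [ht]; exact div_pos one_pos h2x
  have ht3 : t ≤ 1/3 := by rw [ht, div_le_div_iff₀ h2x (by norm_num)]; linarith
  have hxt : (2*(p:ℝ)+1)*t = 1 := by rw [ht]; field_simp
  have hfrac : ((p:ℝ)+1)/(p:ℝ) = (1+t)/(1-t) := by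
    have hm : 1 - t = (2*(p:ℝ))*t := by rw [ht]; field_simp; ring
    have hp1 : 1 + t = (2*(p:ℝ)+2)*t := by rw [ht]; field_simp; ring
    rw [hp1, hm, mul_div_mul_right _ _ ht0.ne',
      div_eq_div_iff hx0.ne' (by linarith : (2*(p:ℝ)) ≠ 0)]
    ring
  have hlog := log_lb ht0 ht3
  have heps : t^2/3 + t^4/5 + t^6/7 + t^8/9 + t^10/11 ≤ eps p := by
    rw [eps, hfrac]
    have hstep : ((p:ℝ) + 1/2) * (2*(t + t^3/3 + t^5/5 + t^7/7 + t^9/9 + t^11/11))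
        ≤ ((p:ℝ) + 1/2) * Real.log ((1+t)/(1-t)) :=
      mul_le_mul_of_nonneg_left hlog (by linarith)
    have hid : ((p:ℝ) + 1/2) * (2*(t + t^3/3 + t^5/5 + t^7/7 + t^9/9 + t^11/11)) - 1
        = t^2/3 + t^4/5 + t^6/7 + t^8/9 + t^10/11 := by
      linear_combination (1 + t^2/3 + t^4/5 + t^6/7 + t^8/9 + t^10/11) * hxt
    linarith
  have hgap := gap_lt (p:ℝ) hx1
  rw [← ht] at hgap
  linarith
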